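/- arXiv:1505.01544 — 3 statements merged into one kernel-verified Lean document; each statement's English description precedes it below -/
import Mathlib

section
/- Let λ > 0, μ ≥ 0 be real and v ∈ ℝ with v ≠ 0 and v ≠ u. Then for u ∈ (0,1), ∫_{-∞}^{∞} log|(λ/2 + μ) + iλt| e^{-ut² + it(u-v)} dt = O(1/(u-v)²), where the implied constant depends only on λ and μ. -/
/-!
The integral is the Fourier transform, at frequency `-(u - v) / 2π`, of `f = ℓ · e^{-ut²}` with
`ℓ t = log |a + iλt| = log (a² + λ²t²) / 2`, `a = λ/2 + μ`, so two integrations by parts give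
`(u - v)² |f̂| ≤ ‖f''‖₁`. Since `|ℓ'| ≤ λ / 2a`, `ℓ` grows at most linearly and `ℓ''` is
integrable, and the Gaussian moments scale so that `∫ |g'| = 2`, `∫ |g''| ≤ 4 √(π u)` and
`∫ |t g''| ≤ 6` for `g = e^{-ut²}`; hence `‖f''‖₁` is bounded uniformly in `u ∈ (0, 1]`.
-/

open MeasureTheory Real
open scoped FourierTransform

section GaussianMoments

variable {b : ℝ}

theorem integrable_abs_pow_mul_exp_neg_mul_sq (hb : 0 < b) (k : ℕ) :
    Integrable fun t : ℝ => |t| ^ k * rexp (-b * t ^ 2) := by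
  have hk : (-1 : ℝ) < k := by linarith [k.cast_nonneg (α := ℝ)]
  refine (integrable_rpow_mul_exp_neg_mul_sq hb hk).abs.congr (.of_forall fun t => ?_)
  simp [abs_mul, abs_pow, abs_of_pos (exp_pos _)]

theorem integral_abs_pow_mul_exp_neg_mul_sq (hb : 0 < b) (k : ℕ) :
    ∫ t : ℝ, |t| ^ k * rexp (-b * t ^ 2) =
      b ^ (-((k : ℝ) + 1) / 2) * Gamma (((k : ℝ) + 1) / 2) := by
  have h := integral_comp_abs (f := fun x : ℝ => x ^ k * rexp (-b * x ^ 2))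
  simp only [sq_abs] at h
  have hq : (-1 : ℝ) < k := by linarith [k.cast_nonneg (α := ℝ)]
  have := integral_rpow_mul_exp_neg_mul_rpow two_pos hq hb
  simp only [rpow_natCast, rpow_two] at this
  rw [h, this]
  ring

theorem integral_abs_mul_exp_neg_mul_sq (hb : 0 < b) :
    ∫ t : ℝ, |t| * rexp (-b * t ^ 2) = b⁻¹ := by
  simpa [rpow_neg_one] using integral_abs_pow_mul_exp_neg_mul_sq hb 1

theorem integral_sq_mul_exp_neg_mul_sq (hb : 0 < b) :
    ∫ t : ℝ, t ^ 2 * rexp (-b * t ^ 2) = √π / 2 * b ^ (-3 / 2 : ℝ) := by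
  have h := integral_abs_pow_mul_exp_neg_mul_sq hb 2
  rw [show ((2 : ℕ) + 1 : ℝ) / 2 = 1 / 2 + 1 by norm_num, Gamma_add_one (by norm_num),
    Gamma_one_half_eq] at h
  simp only [sq_abs] at h
  rw [h]
  norm_num
  ring

theorem integral_abs_pow_three_mul_exp_neg_mul_sq (hb : 0 < b) :
    ∫ t : ℝ, |t| ^ 3 * rexp (-b * t ^ 2) = (b ^ 2)⁻¹ := by
  have h := integral_abs_pow_mul_exp_neg_mul_sq hb 3
  rw [show ((3 : ℕ) + 1 : ℝ) / 2 = 1 + 1 by norm_num, Gamma_add_one one_ne_zero, Gamma_one,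
    show -((3 : ℕ) + 1 : ℝ) / 2 = ((-2 : ℤ) : ℝ) by norm_num, rpow_intCast] at h
  simpa [zpow_neg] using h

end GaussianMoments

section GaussianDerivatives

variable {u : ℝ}

theorem hasDerivAt_exp_neg_mul_sq (u t : ℝ) :
    HasDerivAt (fun t => rexp (-u * t ^ 2)) (-2 * u * t * rexp (-u * t ^ 2)) t := by
  convert ((hasDerivAt_pow 2 t).const_mul (-u)).exp using 1
  ring

theorem hasDerivAt_neg_two_mul_mul_exp_neg_mul_sq (u t : ℝ) :
    HasDerivAt (fun t => -2 * u * t * rexp (-u * t ^ 2))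
      ((4 * u ^ 2 * t ^ 2 - 2 * u) * rexp (-u * t ^ 2)) t :=
  (((hasDerivAt_id t).const_mul (-2 * u)).mul (hasDerivAt_exp_neg_mul_sq u t)).congr_deriv
    (by simp only [id]; ring)

theorem integrable_exp_neg_mul_sq_deriv_deriv_majorant (hu : 0 < u) :
    Integrable fun t => (4 * u ^ 2 * t ^ 2 + 2 * u) * rexp (-u * t ^ 2) := by
  have h2 := (integrable_abs_pow_mul_exp_neg_mul_sq hu 2).const_mul (4 * u ^ 2)
  have h0 := (integrable_exp_neg_mul_sq hu).const_mul (2 * u)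
  refine (h2.add h0).congr (.of_forall fun t => ?_)
  simp only [Pi.add_apply, sq_abs]
  ring

theorem integral_exp_neg_mul_sq_deriv_deriv_majorant (hu : 0 < u) :
    ∫ t, (4 * u ^ 2 * t ^ 2 + 2 * u) * rexp (-u * t ^ 2) = 4 * √π * √u := by
  have h2 := (integrable_abs_pow_mul_exp_neg_mul_sq hu 2).const_mul (4 * u ^ 2)
  simp only [sq_abs] at h2
  have h0 := (integrable_exp_neg_mul_sq hu).const_mul (2 * u)
  rw [show (fun t => (4 * u ^ 2 * t ^ 2 + 2 * u) * rexp (-u * t ^ 2)) =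
      fun t => 4 * u ^ 2 * (t ^ 2 * rexp (-u * t ^ 2)) + 2 * u * rexp (-u * t ^ 2) from
      funext fun t => by ring, integral_add h2 h0, integral_const_mul, integral_const_mul,
    integral_sq_mul_exp_neg_mul_sq hu, integral_gaussian, sqrt_div pi_pos.le]
  have hsu : u ^ (-3 / 2 : ℝ) = (√u)⁻¹ / u := by
    rw [sqrt_eq_rpow, ← rpow_neg hu.le, show (-3 / 2 : ℝ) = -(1 / 2) - 1 by norm_num,
      rpow_sub_one hu.ne']
  have hu' : √u ≠ 0 := (sqrt_pos.2 hu).ne'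
  rw [hsu]
  field_simp
  rw [sq_sqrt hu.le]
  ring

theorem integrable_abs_mul_exp_neg_mul_sq_deriv_deriv_majorant (hu : 0 < u) :
    Integrable fun t => (4 * u ^ 2 * |t| ^ 3 + 2 * u * |t|) * rexp (-u * t ^ 2) := by
  have h3 := (integrable_abs_pow_mul_exp_neg_mul_sq hu 3).const_mul (4 * u ^ 2)
  have h1 := (integrable_abs_pow_mul_exp_neg_mul_sq hu 1).const_mul (2 * u)
  refine (h3.add h1).congr (.of_forall fun t => ?_)
  simp only [Pi.add_apply, pow_one]
  ring

theorem integral_abs_mul_exp_neg_mul_sq_deriv_deriv_majorant (hu : 0 < u) :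
    ∫ t, (4 * u ^ 2 * |t| ^ 3 + 2 * u * |t|) * rexp (-u * t ^ 2) = 6 := by
  have h3 := (integrable_abs_pow_mul_exp_neg_mul_sq hu 3).const_mul (4 * u ^ 2)
  have h1 := (integrable_abs_pow_mul_exp_neg_mul_sq hu 1).const_mul (2 * u)
  simp only [pow_one] at h1
  rw [show (fun t => (4 * u ^ 2 * |t| ^ 3 + 2 * u * |t|) * rexp (-u * t ^ 2)) =
      fun t => 4 * u ^ 2 * (|t| ^ 3 * rexp (-u * t ^ 2)) + 2 * u * (|t| * rexp (-u * t ^ 2)) from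
      funext fun t => by ring, integral_add h3 h1, integral_const_mul, integral_const_mul,
    integral_abs_pow_three_mul_exp_neg_mul_sq hu, integral_abs_mul_exp_neg_mul_sq hu]
  field_simp
  norm_num

end GaussianDerivatives

theorem sq_mul_norm_fourier_le_integral_norm_deriv_deriv {E : Type*} [NormedAddCommGroup E]
    [NormedSpace ℂ E] {f : ℝ → E} (hf : Integrable f) (hf1 : Differentiable ℝ f)
    (hf' : Integrable (deriv f)) (hf2 : Differentiable ℝ (deriv f))
    (hf'' : Integrable (deriv (deriv f))) (ξ : ℝ) :
    (2 * π * ξ) ^ 2 * ‖𝓕 f ξ‖ ≤ ∫ t, ‖deriv (deriv f) t‖ := by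
  have hnorm : ‖𝓕 (deriv (deriv f)) ξ‖ = (2 * π * ξ) ^ 2 * ‖𝓕 f ξ‖ := by
    rw [Real.fourier_deriv hf' hf2 hf'', Real.fourier_deriv hf hf1 hf', norm_smul, norm_smul]
    simp only [norm_mul, Complex.norm_ofNat, Complex.norm_real, norm_eq_abs, abs_of_pos pi_pos,
      Complex.norm_I, mul_one]
    rw [← sq_abs (2 * π * ξ), abs_mul, abs_of_pos (by positivity : 0 < 2 * π)]
    ring
  exact hnorm ▸ VectorFourier.norm_fourierIntegral_le_integral_norm _ _ _ _ _

section GaussianDamping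

variable {h h' h'' : ℝ → ℝ} {C u : ℝ}

theorem abs_le_abs_zero_add_mul_abs (hh : ∀ t, HasDerivAt h (h' t) t) (hC : ∀ t, |h' t| ≤ C)
    (t : ℝ) : |h t| ≤ |h 0| + C * |t| := by
  have := convex_univ.norm_image_sub_le_of_norm_hasDerivWithin_le
    (fun x _ => (hh x).hasDerivWithinAt) (fun x _ => hC x) (Set.mem_univ 0) (Set.mem_univ t)
  simp only [norm_eq_abs, sub_zero] at this
  linarith [abs_sub_abs_le_abs_sub (h t) (h 0)]

theorem integrable_mul_exp_neg_mul_sq_of_abs_deriv_le (hh : ∀ t, HasDerivAt h (h' t) t)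
    (hC : ∀ t, |h' t| ≤ C) (hu : 0 < u) :
    Integrable fun t => h t * rexp (-u * t ^ 2) := by
  have hmaj := ((integrable_exp_neg_mul_sq hu).const_mul |h 0|).add
    ((integrable_abs_pow_mul_exp_neg_mul_sq hu 1).const_mul C)
  refine hmaj.mono' ((continuous_iff_continuousAt.2 fun t => (hh t).continuousAt).mul
    (by fun_prop)).aestronglyMeasurable (.of_forall fun t => ?_)
  rw [norm_mul, norm_of_nonneg (exp_pos _).le]
  calc |h t| * rexp (-u * t ^ 2) ≤ (|h 0| + C * |t|) * rexp (-u * t ^ 2) := by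
        gcongr; exact abs_le_abs_zero_add_mul_abs hh hC t
    _ = _ := by simp only [Pi.add_apply, pow_one]; ring

theorem integrable_deriv_mul_exp_neg_mul_sq_of_abs_deriv_le (hh : ∀ t, HasDerivAt h (h' t) t)
    (hh' : ∀ t, HasDerivAt h' (h'' t) t) (hC : ∀ t, |h' t| ≤ C) (hu : 0 < u) :
    Integrable fun t => h' t * rexp (-u * t ^ 2) + h t * (-2 * u * t * rexp (-u * t ^ 2)) := by
  have hmaj := (((integrable_exp_neg_mul_sq hu).const_mul C).add
    ((integrable_abs_pow_mul_exp_neg_mul_sq hu 1).const_mul (2 * u * |h 0|))).add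
    ((integrable_abs_pow_mul_exp_neg_mul_sq hu 2).const_mul (2 * u * C))
  have hc : Continuous h := continuous_iff_continuousAt.2 fun t => (hh t).continuousAt
  have hc' : Continuous h' := continuous_iff_continuousAt.2 fun t => (hh' t).continuousAt
  refine hmaj.mono' (by fun_prop : Continuous _).aestronglyMeasurable (.of_forall fun t => ?_)
  have hg := exp_pos (-u * t ^ 2)
  have h1 : |h' t * rexp (-u * t ^ 2)| ≤ C * rexp (-u * t ^ 2) := by
    rw [abs_mul, abs_of_pos hg]; gcongr; exact hC t
  have h2 : |h t * (-2 * u * t * rexp (-u * t ^ 2))| ≤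
      (|h 0| + C * |t|) * (2 * u * |t| * rexp (-u * t ^ 2)) := by
    rw [abs_mul, abs_mul, abs_mul, abs_mul, abs_of_pos hg, abs_neg, abs_two, abs_of_pos hu]
    exact mul_le_mul (abs_le_abs_zero_add_mul_abs hh hC t) le_rfl (by positivity)
      ((abs_nonneg _).trans (abs_le_abs_zero_add_mul_abs hh hC t))
  simp only [Pi.add_apply, norm_eq_abs, pow_one]
  calc _ ≤ _ := abs_add_le _ _
    _ ≤ _ := add_le_add h1 h2
    _ = _ := by ring

theorem abs_deriv_deriv_mul_exp_neg_mul_sq_le (hh : ∀ t, HasDerivAt h (h' t) t)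
    (hC : ∀ t, |h' t| ≤ C) (hu : 0 < u) (t : ℝ) :
    |h'' t * rexp (-u * t ^ 2) + 2 * (h' t * (-2 * u * t * rexp (-u * t ^ 2)))
        + h t * ((4 * u ^ 2 * t ^ 2 - 2 * u) * rexp (-u * t ^ 2))| ≤
      |h'' t| + 4 * C * u * (|t| * rexp (-u * t ^ 2))
        + |h 0| * ((4 * u ^ 2 * t ^ 2 + 2 * u) * rexp (-u * t ^ 2))
        + C * ((4 * u ^ 2 * |t| ^ 3 + 2 * u * |t|) * rexp (-u * t ^ 2)) := by
  have hg := exp_pos (-u * t ^ 2)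
  have hC0 : 0 ≤ C := (abs_nonneg _).trans (hC 0)
  have h1 : |h'' t * rexp (-u * t ^ 2)| ≤ |h'' t| := by
    rw [abs_mul, abs_of_pos hg]
    exact mul_le_of_le_one_right (abs_nonneg _) (exp_le_one_iff.2 (by nlinarith [sq_nonneg t]))
  have h2 : |2 * (h' t * (-2 * u * t * rexp (-u * t ^ 2)))| ≤
      2 * (C * (2 * u * |t| * rexp (-u * t ^ 2))) := by
    rw [abs_mul, abs_two, abs_mul]
    gcongr
    · exact hC t
    · rw [abs_mul, abs_mul, abs_mul, abs_of_pos hg, abs_neg, abs_two, abs_of_pos hu]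
  have h3 : |h t * ((4 * u ^ 2 * t ^ 2 - 2 * u) * rexp (-u * t ^ 2))| ≤
      (|h 0| + C * |t|) * ((4 * u ^ 2 * t ^ 2 + 2 * u) * rexp (-u * t ^ 2)) := by
    rw [abs_mul, abs_mul, abs_of_pos hg]
    gcongr
    · exact abs_le_abs_zero_add_mul_abs hh hC t
    · exact (abs_sub _ _).trans_eq
        (by rw [abs_of_nonneg (by positivity), abs_of_pos (by positivity)])
  calc _ ≤ _ := (abs_add_le _ _).trans (add_le_add_left (abs_add_le _ _) _)
    _ ≤ _ := add_le_add (add_le_add h1 h2) h3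
    _ = _ := by rw [pow_succ |t|, sq_abs]; ring

theorem integrable_deriv_deriv_mul_exp_neg_mul_sq_of_abs_deriv_le
    (hh : ∀ t, HasDerivAt h (h' t) t) (hh' : ∀ t, HasDerivAt h' (h'' t) t)
    (hC : ∀ t, |h' t| ≤ C) (hi : Integrable h'') (hu : 0 < u) :
    Integrable fun t => h'' t * rexp (-u * t ^ 2) + 2 * (h' t * (-2 * u * t * rexp (-u * t ^ 2)))
        + h t * ((4 * u ^ 2 * t ^ 2 - 2 * u) * rexp (-u * t ^ 2)) := by
  have hmaj := ((hi.abs.add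
    ((integrable_abs_pow_mul_exp_neg_mul_sq hu 1).const_mul (4 * C * u))).add
    ((integrable_exp_neg_mul_sq_deriv_deriv_majorant hu).const_mul |h 0|)).add
    ((integrable_abs_mul_exp_neg_mul_sq_deriv_deriv_majorant hu).const_mul C)
  have hc : Continuous h := continuous_iff_continuousAt.2 fun t => (hh t).continuousAt
  have hc' : Continuous h' := continuous_iff_continuousAt.2 fun t => (hh' t).continuousAt
  have hmeas : AEStronglyMeasurable fun t => h'' t * rexp (-u * t ^ 2) :=
    hi.aestronglyMeasurable.mul (by fun_prop : Continuous _).aestronglyMeasurable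
  refine hmaj.mono' ((hmeas.add (by fun_prop : Continuous _).aestronglyMeasurable).add
    (by fun_prop : Continuous _).aestronglyMeasurable) (.of_forall fun t => ?_)
  simpa only [Pi.add_apply, norm_eq_abs, pow_one] using
    abs_deriv_deriv_mul_exp_neg_mul_sq_le hh hC hu t

theorem integral_abs_deriv_deriv_mul_exp_neg_mul_sq_le (hh : ∀ t, HasDerivAt h (h' t) t)
    (hh' : ∀ t, HasDerivAt h' (h'' t) t) (hC : ∀ t, |h' t| ≤ C) (hi : Integrable h'')
    (hu : 0 < u) (hu1 : u ≤ 1) :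
    ∫ t, |h'' t * rexp (-u * t ^ 2) + 2 * (h' t * (-2 * u * t * rexp (-u * t ^ 2)))
        + h t * ((4 * u ^ 2 * t ^ 2 - 2 * u) * rexp (-u * t ^ 2))| ≤
      (∫ t, |h'' t|) + 10 * C + 4 * √π * |h 0| := by
  have i1 := hi.abs
  have i2 := (integrable_abs_pow_mul_exp_neg_mul_sq hu 1).const_mul (4 * C * u)
  have i3 := (integrable_exp_neg_mul_sq_deriv_deriv_majorant hu).const_mul |h 0|
  have i4 := (integrable_abs_mul_exp_neg_mul_sq_deriv_deriv_majorant hu).const_mul C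
  simp only [pow_one] at i2
  calc _ ≤ _ := integral_mono
        (integrable_deriv_deriv_mul_exp_neg_mul_sq_of_abs_deriv_le hh hh' hC hi hu).abs
        (((i1.add i2).add i3).add i4) (abs_deriv_deriv_mul_exp_neg_mul_sq_le hh hC hu)
    _ = (∫ t, |h'' t|) + 10 * C + |h 0| * (4 * √π * √u) := by
      rw [integral_add' ((i1.add i2).add i3) i4, integral_add' (i1.add i2) i3,
        integral_add' i1 i2, integral_const_mul, integral_const_mul, integral_const_mul,
        integral_abs_mul_exp_neg_mul_sq hu, integral_exp_neg_mul_sq_deriv_deriv_majorant hu,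
        integral_abs_mul_exp_neg_mul_sq_deriv_deriv_majorant hu]
      field_simp
      ring
    _ ≤ _ := by
      have : |h 0| * (4 * √π * √u) ≤ |h 0| * (4 * √π) :=
        mul_le_mul_of_nonneg_left (mul_le_of_le_one_right (by positivity) (sqrt_le_one.2 hu1))
          (abs_nonneg _)
      linarith

theorem sq_mul_norm_integral_mul_cexp_neg_mul_sq_add_I_mul_le
    (hh : ∀ t, HasDerivAt h (h' t) t) (hh' : ∀ t, HasDerivAt h' (h'' t) t)
    (hC : ∀ t, |h' t| ≤ C) (hi : Integrable h'') (hu : 0 < u) (hu1 : u ≤ 1) (w : ℝ) :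
    w ^ 2 * ‖∫ t : ℝ, (h t : ℂ) * Complex.exp (-u * t ^ 2 + Complex.I * t * w)‖ ≤
      (∫ t, |h'' t|) + 10 * C + 4 * √π * |h 0| := by
  let f : ℝ → ℝ := fun t => h t * rexp (-u * t ^ 2)
  let f' : ℝ → ℝ := fun t => h' t * rexp (-u * t ^ 2) + h t * (-2 * u * t * rexp (-u * t ^ 2))
  let f'' : ℝ → ℝ := fun t => h'' t * rexp (-u * t ^ 2)
    + 2 * (h' t * (-2 * u * t * rexp (-u * t ^ 2)))
    + h t * ((4 * u ^ 2 * t ^ 2 - 2 * u) * rexp (-u * t ^ 2))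
  have hf (t : ℝ) : HasDerivAt (fun t => (f t : ℂ)) (f' t) t :=
    ((hh t).mul (hasDerivAt_exp_neg_mul_sq u t)).ofReal_comp
  have hf' (t : ℝ) : HasDerivAt (fun t => (f' t : ℂ)) (f'' t) t :=
    ((((hh' t).mul (hasDerivAt_exp_neg_mul_sq u t)).add
      ((hh t).mul (hasDerivAt_neg_two_mul_mul_exp_neg_mul_sq u t))).congr_deriv
        (by ring)).ofReal_comp
  have hderiv : deriv (fun t => (f t : ℂ)) = fun t => (f' t : ℂ) := funext fun t => (hf t).deriv
  have hderiv' : deriv (fun t => (f' t : ℂ)) = fun t => (f'' t : ℂ) :=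
    funext fun t => (hf' t).deriv
  have hi0 : Integrable fun t => (f t : ℂ) :=
    (integrable_mul_exp_neg_mul_sq_of_abs_deriv_le hh hC hu).ofReal
  have hi1 : Integrable fun t => (f' t : ℂ) :=
    (integrable_deriv_mul_exp_neg_mul_sq_of_abs_deriv_le hh hh' hC hu).ofReal
  have hi2 : Integrable fun t => (f'' t : ℂ) :=
    (integrable_deriv_deriv_mul_exp_neg_mul_sq_of_abs_deriv_le hh hh' hC hi hu).ofReal
  have hfourier := sq_mul_norm_fourier_le_integral_norm_deriv_deriv hi0
    (fun t => (hf t).differentiableAt) (hderiv ▸ hi1)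
    (hderiv ▸ fun t => (hf' t).differentiableAt) (by rwa [hderiv, hderiv']) (-w / (2 * π))
  have hfreq : (2 * π * (-w / (2 * π))) ^ 2 = w ^ 2 := by field_simp
  have hintegral : ∫ t : ℝ, (h t : ℂ) * Complex.exp (-u * t ^ 2 + Complex.I * t * w) =
      𝓕 (fun t => (f t : ℂ)) (-w / (2 * π)) := by
    rw [Real.fourier_real_eq_integral_exp_smul]
    congr 1 with t
    rw [smul_eq_mul, Complex.exp_add]
    simp only [f]
    push_cast
    field_simp
  rw [hfreq, hderiv, hderiv'] at hfourier
  rw [hintegral]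
  refine hfourier.trans (le_of_eq_of_le ?_
    (integral_abs_deriv_deriv_mul_exp_neg_mul_sq_le hh hh' hC hi hu hu1))
  simp only [Complex.norm_real, norm_eq_abs, f'']

end GaussianDamping

section LogNorm

variable {a : ℝ}

theorem log_norm_ofReal_add_I_mul_mul (a lam t : ℝ) :
    Real.log ‖(a : ℂ) + Complex.I * lam * t‖ = Real.log (a ^ 2 + lam ^ 2 * t ^ 2) / 2 := by
  have hnormSq : Complex.normSq ((a : ℂ) + Complex.I * lam * t) = a ^ 2 + lam ^ 2 * t ^ 2 := by
    simp [Complex.normSq_apply]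
    ring
  rw [Complex.norm_def, hnormSq, Real.log_sqrt (by positivity)]

theorem hasDerivAt_log_norm_ofReal_add_I_mul_mul (ha : a ≠ 0) (lam t : ℝ) :
    HasDerivAt (fun t : ℝ => Real.log ‖(a : ℂ) + Complex.I * lam * t‖)
      (lam ^ 2 * t / (a ^ 2 + lam ^ 2 * t ^ 2)) t := by
  have hP : a ^ 2 + lam ^ 2 * t ^ 2 ≠ 0 := by positivity
  simp only [log_norm_ofReal_add_I_mul_mul]
  refine ((((hasDerivAt_pow 2 t).const_mul (lam ^ 2)).const_add (a ^ 2)).log hP).div_const 2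
    |>.congr_deriv ?_
  field_simp
  ring

theorem hasDerivAt_mul_div_sq_add_mul_sq (ha : a ≠ 0) (lam t : ℝ) :
    HasDerivAt (fun t => lam ^ 2 * t / (a ^ 2 + lam ^ 2 * t ^ 2))
      (lam ^ 2 * (a ^ 2 - lam ^ 2 * t ^ 2) / (a ^ 2 + lam ^ 2 * t ^ 2) ^ 2) t := by
  have hP : a ^ 2 + lam ^ 2 * t ^ 2 ≠ 0 := by positivity
  refine ((hasDerivAt_id t).const_mul (lam ^ 2)).div
    (((hasDerivAt_pow 2 t).const_mul (lam ^ 2)).const_add (a ^ 2)) hP |>.congr_deriv ?_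
  simp only [id]
  field_simp
  ring

theorem abs_mul_div_sq_add_mul_sq_le (ha : a ≠ 0) (lam t : ℝ) :
    |lam ^ 2 * t / (a ^ 2 + lam ^ 2 * t ^ 2)| ≤ |lam| / (2 * |a|) := by
  have hP : 0 < a ^ 2 + lam ^ 2 * t ^ 2 := by positivity
  have ha' : 0 < |a| := abs_pos.2 ha
  rw [abs_div, abs_of_pos hP, div_le_div_iff₀ hP (by positivity), abs_mul, abs_pow, ← sq_abs a,
    ← sq_abs lam, ← sq_abs t]
  nlinarith [mul_nonneg (abs_nonneg lam) (sq_nonneg (|a| - |lam| * |t|))]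

theorem integrable_mul_sub_div_sq_add_mul_sq_sq (ha : a ≠ 0) (lam : ℝ) :
    Integrable fun t => lam ^ 2 * (a ^ 2 - lam ^ 2 * t ^ 2) / (a ^ 2 + lam ^ 2 * t ^ 2) ^ 2 := by
  rcases eq_or_ne lam 0 with rfl | hlam
  · simp
  have hmaj := (integrable_inv_one_add_sq.comp_mul_left' (div_ne_zero hlam ha)).const_mul
    ((lam / a) ^ 2)
  refine hmaj.mono' (by fun_prop : Measurable _).aestronglyMeasurable (.of_forall fun t => ?_)
  have hP : 0 < a ^ 2 + lam ^ 2 * t ^ 2 := by positivity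
  have hmaj_eq :
      (lam / a) ^ 2 * (1 + (lam / a * t) ^ 2)⁻¹ = lam ^ 2 / (a ^ 2 + lam ^ 2 * t ^ 2) := by
    field_simp
  have hnum : |a ^ 2 - lam ^ 2 * t ^ 2| ≤ a ^ 2 + lam ^ 2 * t ^ 2 :=
    abs_le.2 ⟨by nlinarith [sq_nonneg a], by nlinarith [sq_nonneg (lam * t)]⟩
  rw [hmaj_eq, norm_eq_abs, abs_div, abs_mul, abs_of_pos (pow_pos hP 2),
    abs_of_nonneg (sq_nonneg _), div_le_div_iff₀ (pow_pos hP 2) hP, sq (a ^ 2 + lam ^ 2 * t ^ 2),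
    ← mul_assoc]
  gcongr

end LogNorm

theorem stmt_12 (lam mu : ℝ) (hlam : 0 < lam) (hmu : 0 ≤ mu) :
    ∃ C : ℝ, ∀ u v : ℝ, 0 < u → u < 1 → v ≠ 0 → v ≠ u →
      ‖∫ t : ℝ, (Real.log ‖((lam / 2 + mu : ℝ) + Complex.I * lam * t : ℂ)‖ : ℂ)
            * Complex.exp (-u * t ^ 2 + Complex.I * t * (u - v))‖
        ≤ C / (u - v) ^ 2 := by
  have ha : lam / 2 + mu ≠ 0 := by positivity
  refine ⟨?C, fun u v hu hu1 _ hvu => ?bound⟩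
  case bound =>
    have hw : u - v ≠ 0 := sub_ne_zero.2 hvu.symm
    rw [le_div_iff₀ (by positivity), mul_comm, ← Complex.ofReal_sub]
    exact sq_mul_norm_integral_mul_cexp_neg_mul_sq_add_I_mul_le
      (hasDerivAt_log_norm_ofReal_add_I_mul_mul ha lam) (hasDerivAt_mul_div_sq_add_mul_sq ha lam)
      (abs_mul_div_sq_add_mul_sq_le ha lam) (integrable_mul_sub_div_sq_add_mul_sq_sq ha lam) hu
      hu1.le (u - v)
end

section
/- Suppose f: ℝ → ℂ is measurable with |f(x)| ≤ c e^{-(1/2+b)|x|} for constants c, b > 0, and let a_n (n ≥ 2) be complex numbers with |a_n| ≤ A log n for all n. Let v ∈ ℝ with v ∉ {± log m : m ∈ ℕ, m ≥ 1}, and let δ > 0 be the distance from v to this set. Then for u ∈ (0, 1/2), |Σ_{n≥2} (a_n/√n) f((log n - v)/u)| ≤ c e^{-(1/2+b)δ/(2u)} Σ_{n≥2} (|a_n|/√n) e^{-(1/2+b)|log n - v|}, and in particular this sum is O(u) as u → 0⁺. -/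
open MeasureTheory

theorem stmt_14 (f : ℝ → ℂ) (hf : Measurable f) (c b : ℝ) (hc : 0 < c) (hb : 0 < b)
    (hbound : ∀ x : ℝ, ‖f x‖ ≤ c * Real.exp (-(1 / 2 + b) * |x|))
    (a : ℕ → ℂ) (A : ℝ) (ha : ∀ n : ℕ, 2 ≤ n → ‖a n‖ ≤ A * Real.log n)
    (v δ : ℝ) (hδ : 0 < δ)
    (hv : ∀ m : ℕ, 1 ≤ m → δ ≤ |v - Real.log m| ∧ δ ≤ |v + Real.log m|)
    (u : ℝ) (hu0 : 0 < u) (hu1 : u < 1 / 2) :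
    ‖∑' n : {n : ℕ // 2 ≤ n}, a n / Real.sqrt n * f ((Real.log n - v) / u)‖
      ≤ c * Real.exp (-(1 / 2 + b) * δ / (2 * u))
          * ∑' n : {n : ℕ // 2 ≤ n},
              ‖a n‖ / Real.sqrt n * Real.exp (-(1 / 2 + b) * |Real.log n - v|) := by
  set C : ℝ := 1 / 2 + b with hCdef
  have hC : 0 < C := by positivity
  have hA : 0 ≤ A := by
    have h2 := ha 2 le_rfl
    have := (norm_nonneg (a 2)).trans h2
    nlinarith [Real.log_pos (by norm_num : (1:ℝ) < (2:ℕ))]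
  -- pointwise bound
  have key : ∀ n : {n : ℕ // 2 ≤ n},
      ‖a n / Real.sqrt n * f ((Real.log n - v) / u)‖
        ≤ c * Real.exp (-C * δ / (2 * u))
            * (‖a n‖ / Real.sqrt n * Real.exp (-C * |Real.log n - v|)) := by
    rintro ⟨n, hn⟩
    set x : ℝ := Real.log n - v with hxdef
    have hδx : δ ≤ |x| := by
      have := (hv n (by omega)).1
      rwa [abs_sub_comm] at this
    have hxu : |x| / u ≥ δ / (2 * u) + |x| := by
      rw [ge_iff_le, div_add' _ _ _ (ne_of_gt (by positivity : (0:ℝ) < 2 * u)),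
        div_le_div_iff₀ (by positivity) hu0]
      nlinarith [mul_le_mul_of_nonneg_right hδx hu0.le,
        mul_le_mul_of_nonneg_right hu1.le (mul_nonneg (abs_nonneg x) hu0.le)]
    have hfx : ‖f (x / u)‖ ≤ c * (Real.exp (-C * δ / (2 * u)) * Real.exp (-C * |x|)) := by
      refine (hbound (x / u)).trans ?_
      rw [← Real.exp_add]
      apply mul_le_mul_of_nonneg_left _ hc.le
      apply Real.exp_le_exp.2
      rw [abs_div, abs_of_pos hu0]
      have h1 : -C * δ / (2 * u) + -C * |x| = -C * (δ / (2 * u) + |x|) := by ring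
      rw [h1]
      have := mul_le_mul_of_nonneg_left hxu hC.le
      nlinarith
    have hsn : (0:ℝ) ≤ Real.sqrt n := Real.sqrt_nonneg _
    calc ‖a n / Real.sqrt n * f (x / u)‖
        = ‖a n‖ / Real.sqrt n * ‖f (x / u)‖ := by
          rw [norm_mul, norm_div]
          congr 2
          rw [Complex.norm_real, Real.norm_eq_abs, abs_of_nonneg hsn]
      _ ≤ ‖a n‖ / Real.sqrt n * (c * (Real.exp (-C * δ / (2 * u)) * Real.exp (-C * |x|))) := by
          apply mul_le_mul_of_nonneg_left hfx (by positivity)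
      _ = c * Real.exp (-C * δ / (2 * u)) * (‖a n‖ / Real.sqrt n * Real.exp (-C * |x|)) := by
          ring
  -- summability of the majorant
  have hsum : Summable (fun n : {n : ℕ // 2 ≤ n} =>
      ‖a n‖ / Real.sqrt n * Real.exp (-C * |Real.log n - v|)) := by
    set K : ℝ := A / (b / 2) * Real.exp (C * v) with hKdef
    have hsummaj : Summable (fun n : {n : ℕ // 2 ≤ n} => K * (n : ℝ) ^ (-(1 + b / 2))) := by
      have h0 : Summable (fun n : ℕ => K * (n : ℝ) ^ (-(1 + b / 2))) :=
        (Real.summable_nat_rpow.2 (by linarith)).mul_left K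
      exact h0.subtype _
    refine Summable.of_nonneg_of_le (fun n => by positivity) ?_ hsummaj
    rintro ⟨n, hn⟩
    have hn0 : (0:ℝ) < n := by positivity
    have hn1 : (1:ℝ) ≤ n := by exact_mod_cast (by omega : 1 ≤ n)
    have hlog0 : 0 ≤ Real.log n := Real.log_nonneg hn1
    -- bound on exp term
    have he : Real.exp (-C * |Real.log n - v|) ≤ Real.exp (C * v) * (n : ℝ) ^ (-C) := by
      rw [Real.rpow_def_of_pos hn0, ← Real.exp_add, Real.exp_le_exp]
      have := le_abs_self (Real.log n - v)
      nlinarith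
    -- bound on a term
    have hab : ‖a n‖ ≤ A * ((n : ℝ) ^ (b / 2) / (b / 2)) := by
      refine (ha n hn).trans ?_
      exact mul_le_mul_of_nonneg_left
        (Real.log_le_rpow_div hn0.le (by positivity)) hA
    -- sqrt term
    have hsq : (1 : ℝ) / Real.sqrt n = (n : ℝ) ^ (-(1/2 : ℝ)) := by
      rw [Real.sqrt_eq_rpow, Real.rpow_neg hn0.le, one_div]
    have hsqpos : (0:ℝ) < Real.sqrt n := Real.sqrt_pos.2 hn0
    calc ‖a n‖ / Real.sqrt n * Real.exp (-C * |Real.log n - v|)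
        ≤ (A * ((n : ℝ) ^ (b / 2) / (b / 2))) / Real.sqrt n
            * (Real.exp (C * v) * (n : ℝ) ^ (-C)) := by
          apply mul_le_mul
          · exact div_le_div_of_nonneg_right hab hsqpos.le
          · exact he
          · positivity
          · positivity
      _ = K * ((n : ℝ) ^ (b / 2) * ((1:ℝ) / Real.sqrt n) * (n : ℝ) ^ (-C)) := by
          rw [hKdef]; ring
      _ = K * (n : ℝ) ^ (-(1 + b / 2)) := by
          rw [hsq, ← Real.rpow_add hn0, ← Real.rpow_add hn0]
          congr 1
          rw [hCdef]
          ring_nf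
  -- summability of the LHS terms
  have hsum2 : Summable (fun n : {n : ℕ // 2 ≤ n} =>
      ‖a n / Real.sqrt n * f ((Real.log n - v) / u)‖) :=
    Summable.of_nonneg_of_le (fun n => norm_nonneg _) key
      (hsum.mul_left _)
  calc ‖∑' n : {n : ℕ // 2 ≤ n}, a n / Real.sqrt n * f ((Real.log n - v) / u)‖
      ≤ ∑' n : {n : ℕ // 2 ≤ n}, ‖a n / Real.sqrt n * f ((Real.log n - v) / u)‖ :=
        norm_tsum_le_tsum_norm hsum2
    _ ≤ ∑' n : {n : ℕ // 2 ≤ n}, c * Real.exp (-C * δ / (2 * u))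
          * (‖a n‖ / Real.sqrt n * Real.exp (-C * |Real.log n - v|)) :=
        Summable.tsum_le_tsum key hsum2 (hsum.mul_left _)
    _ = c * Real.exp (-C * δ / (2 * u))
          * ∑' n : {n : ℕ // 2 ≤ n},
              ‖a n‖ / Real.sqrt n * Real.exp (-C * |Real.log n - v|) :=
        tsum_mul_left
end

section
/- For any u > 0, v ∈ ℝ and real x > 1, (1/(2πi)) ∫_{Re(s)=σ} e^{us² - vs} x^{-s} ds = (1/√(4πu)) e^{-(v + log x)²/(4u)} for every σ > 0, the vertical integral being independent of σ. -/
/-!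
Along `s = σ + it` the exponent `u s² - (v + log x) s` is a quadratic polynomial in `t` with
leading coefficient `-u`, so the vertical integral is a Gaussian integral in `t`; completing the
square, every trace of `σ` cancels and what is left is `√(π/u) e^{-(v + log x)²/(4u)}`.
-/

open MeasureTheory Complex

theorem integral_cexp_quadratic_vertical {u : ℂ} (hu : 0 < u.re) (a : ℂ) (σ : ℝ) :
    ∫ t : ℝ, cexp (u * (σ + t * I) ^ 2 - a * (σ + t * I))
      = (Real.pi / u) ^ (1 / 2 : ℂ) * cexp (-a ^ 2 / (4 * u)) := by
  have hu0 : u ≠ 0 := fun h => by simp [h] at hu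
  have hquad : ∀ t : ℝ, u * (σ + t * I) ^ 2 - a * (σ + t * I)
      = -u * t ^ 2 + (2 * u * σ - a) * I * t + (u * σ ^ 2 - a * σ) := by
    intro t
    ring_nf
    rw [I_sq]
    ring
  simp_rw [hquad]
  rw [integral_cexp_quadratic (by simpa using hu), neg_neg]
  congr 2
  field_simp
  ring_nf
  rw [I_sq]
  ring

theorem cexp_mul_ofReal_cpow_neg {x : ℝ} (hx : 0 < x) (w s : ℂ) :
    cexp w * (x : ℂ) ^ (-s) = cexp (w - Real.log x * s) := by
  rw [cpow_def_of_ne_zero (ofReal_ne_zero.mpr hx.ne'), ← ofReal_log hx.le, ← Complex.exp_add]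
  ring_nf

theorem ofReal_div_cpow_one_half {p q : ℝ} (hp : 0 ≤ p) (hq : 0 ≤ q) :
    ((p : ℂ) / q) ^ (1 / 2 : ℂ) = (Real.sqrt (p / q) : ℂ) := by
  rw [← ofReal_div, show (1 / 2 : ℂ) = ((1 / 2 : ℝ) : ℂ) by norm_num,
    ← ofReal_cpow (div_nonneg hp hq), Real.sqrt_eq_rpow]

theorem sqrt_pi_div_div_two_pi {u : ℝ} (hu : 0 < u) :
    Real.sqrt (Real.pi / u) / (2 * Real.pi) = 1 / Real.sqrt (4 * Real.pi * u) := by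
  rw [div_eq_div_iff (by positivity) (by positivity), one_mul, ← Real.sqrt_mul (by positivity),
    show Real.pi / u * (4 * Real.pi * u) = (2 * Real.pi) ^ 2 by field_simp; ring]
  exact Real.sqrt_sq (by positivity)

theorem stmt_19_general (u v x : ℝ) (hu : 0 < u) (hx : 1 < x) (σ : ℝ) :
    (1 / (2 * Real.pi * Complex.I))
        * ∫ t : ℝ, Complex.exp (u * (σ + t * Complex.I) ^ 2 - v * (σ + t * Complex.I))
            * (x : ℂ) ^ (-(σ + t * Complex.I)) * Complex.I
      = (1 / Real.sqrt (4 * Real.pi * u) : ℝ)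
          * Complex.exp (-((v + Real.log x) ^ 2) / (4 * u)) := by
  have hx0 : 0 < x := one_pos.trans hx
  have hintegrand : ∀ t : ℝ,
      cexp (u * (σ + t * I) ^ 2 - v * (σ + t * I)) * (x : ℂ) ^ (-(σ + t * I))
        = cexp (u * (σ + t * I) ^ 2 - ((v + Real.log x : ℝ) : ℂ) * (σ + t * I)) := by
    intro t
    rw [cexp_mul_ofReal_cpow_neg hx0]
    push_cast
    ring_nf
  simp_rw [hintegrand]
  rw [integral_mul_const, integral_cexp_quadratic_vertical (by simpa using hu),
    ofReal_div_cpow_one_half Real.pi_pos.le hu.le, ← sqrt_pi_div_div_two_pi hu]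
  have hπ : (Real.pi : ℂ) ≠ 0 := ofReal_ne_zero.mpr Real.pi_ne_zero
  push_cast
  field_simp

theorem stmt_19 (u v x : ℝ) (hu : 0 < u) (hx : 1 < x) (σ : ℝ) (hσ : 0 < σ) :
    (1 / (2 * Real.pi * Complex.I))
        * ∫ t : ℝ, Complex.exp (u * (σ + t * Complex.I) ^ 2 - v * (σ + t * Complex.I))
            * (x : ℂ) ^ (-(σ + t * Complex.I)) * Complex.I
      = (1 / Real.sqrt (4 * Real.pi * u) : ℝ)
          * Complex.exp (-((v + Real.log x) ^ 2) / (4 * u)) :=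
  stmt_19_general u v x hu hx σ
end
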